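/- Let {σ_k}_{k≥1} be nonnegative reals, α, γ > 0, λ > 0, and {a_k}_{k≥1} ⊂ ℝ^d with ‖a_k‖₂ ≤ A. Define recursively Σ̂₁ = λI, σ̄_k = max{σ_k, α, γ‖a_k‖_{Σ̂_k^{-1}}^{1/2}}, Σ̂_{k+1} = Σ̂_k + a_k a_kᵀ / σ̄_k². Then with ι = log(1 + KA²/(dλα²)), we have Σ_{k=1}^K min{1, ‖a_k‖_{Σ̂_k^{-1}}} ≤ 2dι + 2γ²dι + 2√(dι)·√(Σ_{k=1}^K (σ_k² + α²)). -/

import Mathlib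

/-! Write `u_k = ‖a_k‖²_{Σ̂_k⁻¹}` and `m_k = min 1 (u_k / σ̄_k²)`. By the matrix determinant lemma
each update multiplies `det Σ̂` by `1 + u_k / σ̄_k²`, and `min 1 x ≤ 2 log (1 + x)`, so
`∑ m_k ≤ 2 log (det Σ̂_{K+1} / det Σ̂_1)`; AM–GM on the eigenvalues bounds this through the trace,
which grows by at most `A² / α²` per step, giving `∑ m_k ≤ 2dι`.
Each summand is at most `(1 + γ²) m_k + √(σ_k² + α²) √m_k`: if `σ̄_k` is the `γ`-term then
`√u_k = γ² m_k`, otherwise `√u_k = σ̄_k √m_k` with `σ̄_k ≤ √(σ_k² + α²)`. Cauchy–Schwarz on the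
second term finishes the proof. -/

open Matrix Finset

namespace Matrix

variable {n : Type*} [Fintype n]

theorem PosDef.add_smul_vecMulVec_self {M : Matrix n n ℝ} (hM : M.PosDef) {c : ℝ} (hc : 0 ≤ c)
    (v : n → ℝ) : (M + c • vecMulVec v v).PosDef :=
  hM.add_posSemidef ((posSemidef_vecMulVec_self_star v).smul hc)

variable [DecidableEq n]

theorem PosDef.dotProduct_inv_mulVec_nonneg {M : Matrix n n ℝ} (hM : M.PosDef) (v : n → ℝ) :
    0 ≤ v ⬝ᵥ M⁻¹ *ᵥ v := by
  simpa using hM.inv.posSemidef.dotProduct_mulVec_nonneg v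

theorem det_add_vecMulVec {α : Type*} [CommRing α] {M : Matrix n n α} (hM : IsUnit M.det)
    (u v : n → α) : (M + vecMulVec u v).det = M.det * (1 + v ⬝ᵥ M⁻¹ *ᵥ u) := by
  rw [vecMulVec_eq Unit, det_add_replicateCol_mul_replicateRow hM, Matrix.mul_assoc,
    ← replicateCol_mulVec, det_unique (1 + _), add_apply, one_apply_eq,
    replicateRow_mul_replicateCol_apply]

theorem PosSemidef.det_le_trace_div_card_pow {M : Matrix n n ℝ} (hM : M.PosSemidef) :
    M.det ≤ (M.trace / Fintype.card n) ^ Fintype.card n := by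
  rcases isEmpty_or_nonempty n with hn | hn
  · simp
  set μ := hM.isHermitian.eigenvalues
  have hcard : (0 : ℝ) < Fintype.card n := by exact_mod_cast Fintype.card_pos
  have hμ : ∀ i, 0 ≤ μ i := hM.eigenvalues_nonneg
  have amgm := Real.geom_mean_le_arith_mean_weighted univ (fun _ ↦ (Fintype.card n : ℝ)⁻¹) μ
    (fun _ _ ↦ by positivity) (by simp [card_univ, hcard.ne']) (fun i _ ↦ hμ i)
  have hprod : ∏ i, μ i = (∏ i, μ i ^ (Fintype.card n : ℝ)⁻¹) ^ Fintype.card n := by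
    rw [← prod_pow]
    refine prod_congr rfl fun i _ ↦ ?_
    rw [← Real.rpow_natCast, ← Real.rpow_mul (hμ i), inv_mul_cancel₀ hcard.ne', Real.rpow_one]
  calc M.det = ∏ i, μ i := by simpa using hM.isHermitian.det_eq_prod_eigenvalues
    _ ≤ (∑ i, (Fintype.card n : ℝ)⁻¹ * μ i) ^ Fintype.card n :=
      hprod ▸ pow_le_pow_left₀ (prod_nonneg fun i _ ↦ Real.rpow_nonneg (hμ i) _) amgm _
    _ = (M.trace / Fintype.card n) ^ Fintype.card n := by
      rw [← mul_sum, inv_mul_eq_div, hM.isHermitian.trace_eq_sum_eigenvalues]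
      simp [μ]

theorem PosDef.log_det_le_of_trace_le {M : Matrix n n ℝ} (hM : M.PosDef) {t : ℝ}
    (ht : M.trace ≤ t) : Real.log M.det ≤ Fintype.card n * Real.log (t / Fintype.card n) := by
  have htr : 0 ≤ M.trace / Fintype.card n := div_nonneg hM.posSemidef.trace_nonneg (by positivity)
  rw [← Real.log_pow]
  exact Real.log_le_log hM.det_pos
    (hM.posSemidef.det_le_trace_div_card_pow.trans (pow_le_pow_left₀ htr (by gcongr) _))

end Matrix

theorem min_one_le_two_mul_log_one_add {x : ℝ} (hx : 0 ≤ x) : min 1 x ≤ 2 * Real.log (1 + x) := by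
  have hlog := Real.one_sub_inv_le_log_of_pos (by positivity : 0 < 1 + x)
  have hmin : min 1 x * (1 + x) ≤ 2 * x := by
    rcases le_total x 1 with h | h
    · rw [min_eq_right h]; nlinarith
    · rw [min_eq_left h]; linarith
  calc min 1 x ≤ 2 * (1 - (1 + x)⁻¹) := by
        rw [show 2 * (1 - (1 + x)⁻¹) = 2 * x / (1 + x) by field_simp; ring,
          le_div_iff₀ (by positivity)]
        exact hmin
    _ ≤ 2 * Real.log (1 + x) := by gcongr

section RankOneUpdates

variable {n : Type*} [Fintype n] {S : ℕ → Matrix n n ℝ} {w : ℕ → ℝ}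
  {v : ℕ → n → ℝ}

theorem posDef_of_rankOne_updates (h1 : (S 1).PosDef) (hw : ∀ k, 0 ≤ w k)
    (hrec : ∀ k, 1 ≤ k → S (k + 1) = S k + w k • vecMulVec (v k) (v k)) {k : ℕ} (hk : 1 ≤ k) :
    (S k).PosDef := by
  induction k, hk using Nat.le_induction with
  | base => exact h1
  | succ k hk ih => rw [hrec k hk]; exact ih.add_smul_vecMulVec_self (hw k) _

theorem trace_of_rankOne_updates
    (hrec : ∀ k, 1 ≤ k → S (k + 1) = S k + w k • vecMulVec (v k) (v k)) (K : ℕ) :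
    (S (K + 1)).trace = (S 1).trace + ∑ k ∈ Icc 1 K, w k * (v k ⬝ᵥ v k) := by
  induction K with
  | zero => simp
  | succ K ih =>
    rw [sum_Icc_succ_top (by omega), hrec (K + 1) (by omega), trace_add, trace_smul,
      trace_vecMulVec, ih, smul_eq_mul]
    ring

theorem log_det_of_rankOne_updates [DecidableEq n] (h1 : (S 1).PosDef) (hw : ∀ k, 0 ≤ w k)
    (hrec : ∀ k, 1 ≤ k → S (k + 1) = S k + w k • vecMulVec (v k) (v k)) (K : ℕ) :
    Real.log (S (K + 1)).det = Real.log (S 1).det +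
      ∑ k ∈ Icc 1 K, Real.log (1 + w k * (v k ⬝ᵥ (S k)⁻¹ *ᵥ v k)) := by
  induction K with
  | zero => simp
  | succ K ih =>
    have hS := posDef_of_rankOne_updates h1 hw hrec (Nat.le_add_left 1 K)
    have hq := mul_nonneg (hw (K + 1)) (hS.dotProduct_inv_mulVec_nonneg (v (K + 1)))
    rw [sum_Icc_succ_top (by omega), hrec (K + 1) (by omega), ← smul_vecMulVec,
      det_add_vecMulVec hS.det_pos.ne'.isUnit, mulVec_smul, dotProduct_smul, smul_eq_mul,
      Real.log_mul hS.det_pos.ne' (by positivity), ih]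
    ring

theorem sum_min_one_le_of_rankOne_updates [DecidableEq n] {lam L : ℝ} (hlam : 0 < lam)
    (h1 : S 1 = lam • 1) (hw : ∀ k, 0 ≤ w k) (hL : ∀ k, w k * (v k ⬝ᵥ v k) ≤ L)
    (hrec : ∀ k, 1 ≤ k → S (k + 1) = S k + w k • vecMulVec (v k) (v k)) (K : ℕ) :
    ∑ k ∈ Icc 1 K, min 1 (w k * (v k ⬝ᵥ (S k)⁻¹ *ᵥ v k)) ≤
      2 * Fintype.card n * Real.log (1 + K * L / (Fintype.card n * lam)) := by
  set c : ℝ := (Fintype.card n : ℝ)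
  have hS1 : (S 1).PosDef := h1 ▸ PosDef.one.smul hlam
  have htrace : (S (K + 1)).trace ≤ c * lam + K * L := by
    rw [trace_of_rankOne_updates hrec, h1, trace_smul, trace_one, smul_eq_mul]
    have := sum_le_sum fun k (_ : k ∈ Icc 1 K) ↦ hL k
    simp only [sum_const, Nat.card_Icc, add_tsub_cancel_right, nsmul_eq_mul] at this
    linarith
  have hdet1 : Real.log (S 1).det = c * Real.log lam := by
    rw [h1, det_smul, det_one, mul_one, Real.log_pow]
  have hlog : c * Real.log ((c * lam + K * L) / c) =
      c * Real.log lam + c * Real.log (1 + K * L / (c * lam)) := by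
    rcases eq_or_ne c 0 with hc | hc
    · simp [hc]
    have hL0 : 0 ≤ L :=
      (mul_nonneg (hw 0) (Fintype.sum_nonneg fun _ ↦ mul_self_nonneg _)).trans (hL 0)
    rw [← mul_add, ← Real.log_mul hlam.ne' (by positivity)]
    congr 2
    field_simp
  have hS : ∀ k, 1 ≤ k → (S k).PosDef := fun _ ↦ posDef_of_rankOne_updates hS1 hw hrec
  have hlogdet := (hS (K + 1) (by omega)).log_det_le_of_trace_le htrace
  calc ∑ k ∈ Icc 1 K, min 1 (w k * (v k ⬝ᵥ (S k)⁻¹ *ᵥ v k))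
      ≤ ∑ k ∈ Icc 1 K, 2 * Real.log (1 + w k * (v k ⬝ᵥ (S k)⁻¹ *ᵥ v k)) :=
        sum_le_sum fun k hk ↦ min_one_le_two_mul_log_one_add (mul_nonneg (hw k)
          ((hS k (mem_Icc.mp hk).1).dotProduct_inv_mulVec_nonneg _))
    _ = 2 * (Real.log (S (K + 1)).det - Real.log (S 1).det) := by
        rw [← mul_sum, log_det_of_rankOne_updates hS1 hw hrec]
        ring
    _ ≤ 2 * c * Real.log (1 + K * L / (c * lam)) := by linarith

end RankOneUpdates

theorem min_one_sqrt_le_of_eq_max {u σ α γ s : ℝ} (hu : 0 ≤ u) (hα : 0 < α)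
    (hs : s = max (max σ α) (γ * √(√u))) :
    min 1 √u ≤ (1 + γ ^ 2) * min 1 ((s ^ 2)⁻¹ * u) +
      √(σ ^ 2 + α ^ 2) * √(min 1 ((s ^ 2)⁻¹ * u)) := by
  set m := min 1 ((s ^ 2)⁻¹ * u)
  have hs0 : 0 < s := hα.trans_le (hs ▸ le_max_of_le_left (le_max_right _ _))
  have hm0 : 0 ≤ m := le_min zero_le_one (by positivity)
  have hγm : 0 ≤ γ ^ 2 * m := by positivity
  have hσm : 0 ≤ √(σ ^ 2 + α ^ 2) * √m := by positivity
  rcases le_total 1 ((s ^ 2)⁻¹ * u) with h | h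
  · have hm : m = 1 := min_eq_left h
    linarith [min_le_left 1 √u]
  have hm : m = (s ^ 2)⁻¹ * u := min_eq_right h
  have hu_eq : u = s ^ 2 * m := by rw [hm]; field_simp
  suffices √u ≤ γ ^ 2 * m ∨ √u ≤ √(σ ^ 2 + α ^ 2) * √m by
    rcases this with h' | h' <;> linarith [min_le_right 1 √u]
  rcases max_choice (max σ α) (γ * √(√u)) with hmax | hmax <;> rw [hmax] at hs
  · right
    have hσα : max σ α ≤ √(σ ^ 2 + α ^ 2) :=
      max_le ((le_abs_self σ).trans (Real.abs_le_sqrt (by nlinarith)))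
        ((le_abs_self α).trans (Real.abs_le_sqrt (by nlinarith)))
    rw [hu_eq, Real.sqrt_mul (sq_nonneg s), Real.sqrt_sq hs0.le]
    exact mul_le_mul_of_nonneg_right (hs ▸ hσα) (Real.sqrt_nonneg m)
  · left
    -- `√u · √u = u = s² m = γ² √u m`, so either `√u = 0` or `√u = γ² m`.
    have : √u * √u = √u * (γ ^ 2 * m) :=
      calc √u * √u = s ^ 2 * m := (Real.mul_self_sqrt hu).trans hu_eq
        _ = √u * (γ ^ 2 * m) := by
          rw [hs, mul_pow, Real.sq_sqrt (Real.sqrt_nonneg u)]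
          ring
    rcases mul_eq_mul_left_iff.mp this with h' | h'
    · exact h'.le
    · rw [h']; exact hγm

theorem sum_le_mul_add_sqrt_mul_sqrt {ι : Type*} (s : Finset ι) {f m t : ι → ℝ} {c B : ℝ}
    (hc : 0 ≤ c) (hm : ∀ i ∈ s, 0 ≤ m i) (ht : ∀ i ∈ s, 0 ≤ t i) (hB : ∑ i ∈ s, m i ≤ B)
    (hf : ∀ i ∈ s, f i ≤ c * m i + √(t i) * √(m i)) :
    ∑ i ∈ s, f i ≤ c * B + √(∑ i ∈ s, t i) * √B := by
  have hcs : ∑ i ∈ s, √(t i) * √(m i) ≤ √(∑ i ∈ s, t i) * √(∑ i ∈ s, m i) := by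
    convert Real.sum_mul_le_sqrt_mul_sqrt s (fun i ↦ √(t i)) (fun i ↦ √(m i)) using 3 <;>
      exact sum_congr rfl fun i hi ↦ (Real.sq_sqrt (by simp [*])).symm
  calc ∑ i ∈ s, f i ≤ ∑ i ∈ s, (c * m i + √(t i) * √(m i)) := sum_le_sum hf
    _ = c * ∑ i ∈ s, m i + ∑ i ∈ s, √(t i) * √(m i) := by rw [sum_add_distrib, mul_sum]
    _ ≤ c * B + √(∑ i ∈ s, t i) * √B := by
        gcongr
        exact hcs.trans (by gcongr)

theorem adaptive_elliptical_potential_general {d K : ℕ} (lam alpha gam A : ℝ)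
    (hlam : 0 < lam) (halpha : 0 < alpha)
    (σ : ℕ → ℝ)
    (a : ℕ → Fin d → ℝ) (ha : ∀ k, Real.sqrt (∑ j, (a k j) ^ 2) ≤ A)
    (Sig : ℕ → Matrix (Fin d) (Fin d) ℝ)
    (σb : ℕ → ℝ)
    (hSig1 : Sig 1 = lam • (1 : Matrix (Fin d) (Fin d) ℝ))
    (hσb : ∀ k, σb k = max (max (σ k) alpha)
      (gam * Real.sqrt (Real.sqrt (a k ⬝ᵥ (Sig k)⁻¹.mulVec (a k)))))
    (hrec : ∀ k, 1 ≤ k →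
      Sig (k + 1) = Sig k + ((σb k) ^ 2)⁻¹ • vecMulVec (a k) (a k)) :
    ∑ k ∈ Finset.Icc 1 K, min 1 (Real.sqrt (a k ⬝ᵥ (Sig k)⁻¹.mulVec (a k))) ≤
      2 * d * Real.log (1 + K * A ^ 2 / (d * lam * alpha ^ 2)) +
        2 * gam ^ 2 * d * Real.log (1 + K * A ^ 2 / (d * lam * alpha ^ 2)) +
        2 * Real.sqrt (d * Real.log (1 + K * A ^ 2 / (d * lam * alpha ^ 2))) *
          Real.sqrt (∑ k ∈ Finset.Icc 1 K, ((σ k) ^ 2 + alpha ^ 2)) := by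
  set ι := Real.log (1 + K * A ^ 2 / (d * lam * alpha ^ 2))
  have hσb_ge : ∀ k, alpha ≤ σb k := fun k ↦ hσb k ▸ le_max_of_le_left (le_max_right _ _)
  have hw : ∀ k, 0 ≤ ((σb k) ^ 2)⁻¹ := fun k ↦ by positivity
  have hL : ∀ k, ((σb k) ^ 2)⁻¹ * (a k ⬝ᵥ a k) ≤ A ^ 2 / alpha ^ 2 := fun k ↦ by
    obtain ⟨-, hnorm⟩ := Real.sqrt_le_iff.mp (ha k)
    rw [div_eq_inv_mul]
    gcongr
    · exact Fintype.sum_nonneg fun _ ↦ mul_self_nonneg _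
    · exact hσb_ge k
    · simpa [dotProduct, sq] using hnorm
  have hpot := sum_min_one_le_of_rankOne_updates hlam hSig1 hw hL hrec K
  rw [Fintype.card_fin,
    show K * (A ^ 2 / alpha ^ 2) / (d * lam) = K * A ^ 2 / (d * lam * alpha ^ 2) by ring] at hpot
  have hS1 : (Sig 1).PosDef := hSig1 ▸ PosDef.one.smul hlam
  have hu : ∀ k ∈ Icc 1 K, 0 ≤ a k ⬝ᵥ (Sig k)⁻¹ *ᵥ a k := fun k hk ↦
    (posDef_of_rankOne_updates hS1 hw hrec (mem_Icc.mp hk).1).dotProduct_inv_mulVec_nonneg _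
  have hsum := sum_le_mul_add_sqrt_mul_sqrt (Icc 1 K) (c := 1 + gam ^ 2) (by positivity)
    (fun k hk ↦ le_min zero_le_one (mul_nonneg (hw k) (hu k hk))) (fun k _ ↦ by positivity) hpot
    (fun k hk ↦ min_one_sqrt_le_of_eq_max (hu k hk) halpha (hσb k))
  have hsqrt : √(2 * d * ι) ≤ 2 * √(d * ι) := by
    rw [mul_assoc, Real.sqrt_mul zero_le_two]
    gcongr
    exact Real.sqrt_le_iff.mpr ⟨zero_le_two, by norm_num⟩
  calc _ ≤ (1 + gam ^ 2) * (2 * d * ι) + √(∑ k ∈ Icc 1 K, (σ k ^ 2 + alpha ^ 2)) * √(2 * d * ι) :=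
        hsum
    _ ≤ (1 + gam ^ 2) * (2 * d * ι) +
          √(∑ k ∈ Icc 1 K, (σ k ^ 2 + alpha ^ 2)) * (2 * √(d * ι)) := by gcongr
    _ = _ := by ring

theorem adaptive_elliptical_potential {d K : ℕ} (lam alpha gam A : ℝ)
    (hlam : 0 < lam) (halpha : 0 < alpha) (hgam : 0 < gam) (hd : 0 < d)
    (σ : ℕ → ℝ) (hσ : ∀ k, 0 ≤ σ k)
    (a : ℕ → Fin d → ℝ) (ha : ∀ k, Real.sqrt (∑ j, (a k j) ^ 2) ≤ A)
    (Sig : ℕ → Matrix (Fin d) (Fin d) ℝ)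
    (σb : ℕ → ℝ)
    (hSig1 : Sig 1 = lam • (1 : Matrix (Fin d) (Fin d) ℝ))
    (hσb : ∀ k, σb k = max (max (σ k) alpha)
      (gam * Real.sqrt (Real.sqrt (a k ⬝ᵥ (Sig k)⁻¹.mulVec (a k)))))
    (hrec : ∀ k, 1 ≤ k →
      Sig (k + 1) = Sig k + ((σb k) ^ 2)⁻¹ • vecMulVec (a k) (a k)) :
    ∑ k ∈ Finset.Icc 1 K, min 1 (Real.sqrt (a k ⬝ᵥ (Sig k)⁻¹.mulVec (a k))) ≤
      2 * d * Real.log (1 + K * A ^ 2 / (d * lam * alpha ^ 2)) +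
        2 * gam ^ 2 * d * Real.log (1 + K * A ^ 2 / (d * lam * alpha ^ 2)) +
        2 * Real.sqrt (d * Real.log (1 + K * A ^ 2 / (d * lam * alpha ^ 2))) *
          Real.sqrt (∑ k ∈ Finset.Icc 1 K, ((σ k) ^ 2 + alpha ^ 2)) :=
  adaptive_elliptical_potential_general lam alpha gam A hlam halpha σ a ha Sig σb hSig1 hσb hrec
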